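/- arXiv:1906.11067 — 2 statements merged into one kernel-verified Lean document; each statement's English description precedes it below -/
import Mathlib

section
/- Assume the setting of the space X and the seminorms ‖·‖_{1,ℓ} (see context), let α > 0 and assume in addition n ≥ N/(2α). There exists a constant C₂ ≥ 1, depending only on N, α, k, n, m, such that for every η > 0 and every v ∈ X with η · inf_{x∈ℝ^N}(⟨x⟩^n |v(x)|) ≥ 1, and every multi-index β with 2 ≤ |β| ≤ 2m: ‖⟨·⟩^n D^β(|v|^α v)‖_{L^∞} ≤ C₂ ‖v‖_{L^∞}^α ‖⟨·⟩^n D^β v‖_{L^∞} + C₂ ‖v‖_{L^∞}^α (η ‖v‖_{1,|β|−1})^{2|β|} ‖v‖_{1,|β|−1}. -/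
open MeasureTheory Filter Complex
open scoped FourierTransform ENNReal Topology Real

noncomputable section

/-- Euclidean space `ℝ^N`. -/
abbrev Eu (N : ℕ) := EuclideanSpace ℝ (Fin N)

/-- The Japanese bracket `⟨x⟩ = (1+|x|²)^{1/2}`. -/
def jap {N : ℕ} (x : Eu N) : ℝ := (1 + ‖x‖ ^ 2) ^ ((1 : ℝ) / 2)

/-- `D^β u` for a multi-index `β` with `|β| = i`, encoded by the list `σ` of coordinate
directions (each coordinate `j` occurring `β j` times). -/
def Dd {N : ℕ} (i : ℕ) (σ : Fin i → Fin N) (u : Eu N → ℂ) (x : Eu N) : ℂ :=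
  iteratedFDeriv ℝ i u x fun j => EuclideanSpace.single (σ j) 1

/-- The Laplacian `Δu = Σᵢ ∂²u/∂xᵢ²`. -/
def lap {N : ℕ} (u : Eu N → ℂ) (x : Eu N) : ℂ :=
  ∑ i : Fin N, iteratedFDeriv ℝ 2 u x fun _ => EuclideanSpace.single i 1

/-- First-order partial derivative `∂u/∂xᵢ`. -/
def pd {N : ℕ} (i : Fin N) (u : Eu N → ℂ) : Eu N → ℂ := fun x =>
  fderiv ℝ u x (EuclideanSpace.single i 1)

/-- The weighted function `⟨x⟩^a f`. -/
def wt {N : ℕ} (a : ℕ) (f : Eu N → ℂ) : Eu N → ℂ := fun x => (jap x ^ a : ℝ) * f x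

/-- `‖⟨x⟩^a f‖_{L^p}` (real-valued). -/
def wnorm {N : ℕ} (a : ℕ) (p : ℝ≥0∞) (f : Eu N → ℂ) : ℝ :=
  (eLpNorm (wt a f) p volume).toReal

/-- Membership in the space `X` (with `J = 2m+2+k+n`): `u ∈ H^J(ℝ^N)` together with the
weighted `L^∞` and `L²` conditions on the derivatives `D^β u`. -/
def MemX (N k n m : ℕ) (u : Eu N → ℂ) : Prop :=
  ContDiff ℝ (2*m+2+k+n) u ∧
  (∀ i ≤ 2*m+2+k+n, ∀ σ : Fin i → Fin N, MemLp (Dd i σ u) 2 volume) ∧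
  (∀ i ≤ 2*m, ∀ σ : Fin i → Fin N, MemLp (wt n (Dd i σ u)) ⊤ volume) ∧
  (∀ i, 2*m+1 ≤ i → i ≤ 2*m+2+k → ∀ σ : Fin i → Fin N,
    MemLp (wt n (Dd i σ u)) 2 volume) ∧
  (∀ i, 2*m+2+k < i → i ≤ 2*m+2+k+n → ∀ σ : Fin i → Fin N,
    MemLp (wt (2*m+2+k+n - i) (Dd i σ u)) 2 volume)

/-- The norm of the space `X`. -/
def normX (N k n m : ℕ) (u : Eu N → ℂ) : ℝ :=
  (∑ i ∈ Finset.range (2*m+1), ⨆ σ : Fin i → Fin N, wnorm n ⊤ (Dd i σ u)) +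
  ∑ p ∈ Finset.range (k+2), ∑ q ∈ Finset.range (n+1),
    ⨆ σ : Fin (p+q+2*m+1) → Fin N, wnorm (n - q) 2 (Dd (p+q+2*m+1) σ u)

/-- `inf_{x ∈ ℝ^N} ⟨x⟩^n |u(x)|`. -/
def infv {N : ℕ} (n : ℕ) (u : Eu N → ℂ) : ℝ := ⨅ x : Eu N, jap x ^ n * ‖u x‖

/-- The free Schrödinger group `e^{itΔ}`, defined on the Fourier side as multiplication by
`e^{-4π²it|ξ|²}` (with Mathlib's `2π`-convention for the Fourier transform this is the
unitary group generated by `iΔ`). -/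
def schr (N : ℕ) (t : ℝ) (f : Eu N → ℂ) : Eu N → ℂ :=
  𝓕⁻ fun ξ : Eu N => Complex.exp (Complex.I * Complex.ofReal (-(4 * π ^ 2 * t * ‖ξ‖ ^ 2))) * 𝓕 f ξ

/-- The seminorm `‖u‖_{1,ℓ} = sup_{|β| ≤ ℓ} ‖⟨x⟩^n D^β u‖_{L^∞}`. -/
def snorm1 (N n : ℕ) (ℓ : ℕ) (u : Eu N → ℂ) : ℝ :=
  ⨆ i : Fin (ℓ+1), ⨆ σ : Fin (i : ℕ) → Fin N, wnorm n ⊤ (Dd i σ u)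

/-- The seminorm `‖u‖_{2,ℓ} = sup_{2m+1 ≤ |β| ≤ ℓ} ‖⟨x⟩^n D^β u‖_{L²}` (zero if `ℓ ≤ 2m`). -/
def snorm2 (N n m : ℕ) (ℓ : ℕ) (u : Eu N → ℂ) : ℝ :=
  ⨆ i : Fin (ℓ+1), ⨆ σ : Fin (i : ℕ) → Fin N,
    if 2*m+1 ≤ (i : ℕ) then wnorm n 2 (Dd i σ u) else 0

/-- The seminorm `‖u‖_{3,ℓ} = sup_{2m+3+k ≤ |β| ≤ ℓ} ‖⟨x⟩^{J-ℓ} D^β u‖_{L²}`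
(zero if `ℓ ≤ 2m+2+k`), where `J = 2m+2+k+n`. -/
def snorm3 (N k n m : ℕ) (ℓ : ℕ) (u : Eu N → ℂ) : ℝ :=
  ⨆ i : Fin (ℓ+1), ⨆ σ : Fin (i : ℕ) → Fin N,
    if 2*m+3+k ≤ (i : ℕ) then wnorm (2*m+2+k+n - ℓ) 2 (Dd i σ u) else 0

/-- The exponent `σ₁ = 1/(4[4J(J-2m-1) + 4J + 4/N + 1](8m+1)^{2m})`
(note `J - 2m - 1 = k+n+1`). -/
def sigma1 (N k n m : ℕ) : ℝ :=
  1 / (4 * (4*((2*m+2+k+n : ℕ) : ℝ)*((k : ℝ)+n+1) + 4*((2*m+2+k+n : ℕ) : ℝ) + 4/(N : ℝ) + 1)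
      * (8*(m : ℝ)+1) ^ (2*m))

/-- The exponents `σ_j`, `0 ≤ j ≤ J`. -/
def sigmaJ (N k n m : ℕ) (α : ℝ) (j : ℕ) : ℝ :=
  if j = 0 then 0
  else if j = 1 then sigma1 N k n m
  else if j ≤ 2*m then (8*(m : ℝ)+1) ^ j * sigma1 N k n m
  else
    (if j = 2*m+1 then (0 : ℝ) else
      4*((2*m+2+k+n : ℕ) : ℝ) * ((8*(m : ℝ)+1) ^ (2*m) * sigma1 N k n m) * ((j : ℝ) - (2*m+1)))
    + ((2 - N*α)/2 + (4*((2*m+2+k+n : ℕ) : ℝ) + 2*α + 1)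
        * ((8*(m : ℝ)+1) ^ (2*m) * sigma1 N k n m))

/-- Duhamel formulation of `∂ₜu = iΔu + λ|u|^α u`, `u(0) = u₀`, on `[0,∞)`. -/
def IsDuhamelNLS (N : ℕ) (α : ℝ) (Λ : ℂ) (u0 : Eu N → ℂ) (u : ℝ → Eu N → ℂ) : Prop :=
  u 0 = u0 ∧ ∀ t, 0 ≤ t → ∀ x, u t x = schr N t u0 x +
    Λ * ∫ s in (0:ℝ)..t,
      schr N (t - s) (fun y => Complex.ofReal (‖u s y‖ ^ α) * u s y) x

/-- `u ∈ C([0,∞), H¹(ℝ^N))`. -/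
def ContH1 (N : ℕ) (u : ℝ → Eu N → ℂ) : Prop :=
  (∀ t, 0 ≤ t → MemLp (u t) 2 volume ∧ ∀ i : Fin N, MemLp (pd i (u t)) 2 volume) ∧
  ∀ t₀, 0 ≤ t₀ → Tendsto
    (fun t => eLpNorm (u t - u t₀) 2 volume
      + ∑ i : Fin N, eLpNorm (pd i (u t) - pd i (u t₀)) 2 volume)
    (𝓝[Set.Ici 0] t₀) (𝓝 0)

/-- Duhamel formulation of `∂ₜv = iΔv + λ(1-bt)^{-(4-Nα)/2}|v|^α v`, `v(0) = v₀`,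
on `[0,T]` (the equation (NLS_b)). -/
def IsDuhamelNLSb (N : ℕ) (α : ℝ) (Λ : ℂ) (b : ℝ) (v0 : Eu N → ℂ) (T : ℝ)
    (v : ℝ → Eu N → ℂ) : Prop :=
  v 0 = v0 ∧ ∀ t ∈ Set.Icc (0:ℝ) T, ∀ x, v t x = schr N t v0 x +
    Λ * ∫ s in (0:ℝ)..t, Complex.ofReal ((1 - b*s) ^ (-(4 - (N : ℝ)*α)/2)) *
      schr N (t - s) (fun y => Complex.ofReal (‖v s y‖ ^ α) * v s y) x

/-- `v ∈ C(s, X)`. -/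
def ContXOn (N k n m : ℕ) (s : Set ℝ) (v : ℝ → Eu N → ℂ) : Prop :=
  (∀ t ∈ s, MemX N k n m (v t)) ∧
  ∀ t₀ ∈ s, Tendsto (fun t => normX N k n m (v t - v t₀)) (𝓝[s] t₀) (𝓝 0)

/-- `v ∈ C([0,T], X)` is a solution of (NLS_b) on `[0,T]`. -/
def IsSolXOn (N k n m : ℕ) (α : ℝ) (Λ : ℂ) (b : ℝ) (v0 : Eu N → ℂ) (T : ℝ)
    (v : ℝ → Eu N → ℂ) : Prop :=
  ContXOn N k n m (Set.Icc 0 T) v ∧ IsDuhamelNLSb N α Λ b v0 T v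

/-- `inf_{0≤t≤T} inf_{x∈ℝ^N} ⟨x⟩^n |v(t,x)| > 0`. -/
def PosInfOn (N n : ℕ) (T : ℝ) (v : ℝ → Eu N → ℂ) : Prop :=
  ∃ ε > (0:ℝ), ∀ t ∈ Set.Icc (0:ℝ) T, ε ≤ infv n (v t)

/-- `v` is the maximal solution of (NLS_b), defined on `[0, Tmax)` with `Tmax ≤ 1/b`,
satisfying the non-vanishing condition on every compact subinterval, and blowing up
at `Tmax` if `Tmax < 1/b`. -/
def IsMaxSol (N k n m : ℕ) (α : ℝ) (Λ : ℂ) (b : ℝ) (v0 : Eu N → ℂ) (Tmax : ℝ)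
    (v : ℝ → Eu N → ℂ) : Prop :=
  0 < Tmax ∧ Tmax ≤ 1/b ∧
  (∀ T, 0 < T → T < Tmax → IsSolXOn N k n m α Λ b v0 T v ∧ PosInfOn N n T v) ∧
  (Tmax < 1/b →
    Tendsto (fun t => normX N k n m (v t) + (infv n (v t))⁻¹) (𝓝[Set.Iio Tmax] Tmax) atTop)

/-- `Ψ_T ≤ C`, i.e. `Φ_{1,T} ≤ C`, `Φ_{2,T} ≤ C`, `Φ_{3,T} ≤ C` and `Φ_{4,T} ≤ C`
(with `Φ_{4,T} ≤ C` written as `(1-bt)^{σ₁} ≤ C · inf_x ⟨x⟩^n |v(t,x)|`). -/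
def PsiLe (N k n m : ℕ) (α b : ℝ) (v : ℝ → Eu N → ℂ) (T C : ℝ) : Prop :=
  ∀ t ∈ Set.Icc (0:ℝ) T,
    (∀ j ≤ 2*m, (1 - b*t) ^ (sigmaJ N k n m α j) * snorm1 N n j (v t) ≤ C) ∧
    (∀ j, 2*m+1 ≤ j → j ≤ 2*m+2+k →
      (1 - b*t) ^ (sigmaJ N k n m α j) * snorm2 N n m j (v t) ≤ C) ∧
    (∀ j, 2*m+3+k ≤ j → j ≤ 2*m+2+k+n →
      (1 - b*t) ^ (sigmaJ N k n m α j) * snorm3 N k n m j (v t) ≤ C) ∧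
    (1 - b*t) ^ (sigmaJ N k n m α 1) ≤ C * infv n (v t)


section AuxNonlin

open OrderedFinpartition in
theorem fin_strictMono_id' {i : ℕ} (f : Fin i → Fin i) (h : StrictMono f) : f = id := by
  haveI : WellFoundedLT (Fin i) := Finite.to_wellFoundedLT
  have hsurj : Function.Surjective f := Finite.surjective_of_injective h.injective
  exact (h.range_inj strictMono_id).1 (by
    rw [Set.range_id, Set.range_eq_univ]; exact hsurj)

theorem ofp_sum {i : ℕ} (c : OrderedFinpartition i) : ∑ m, c.partSize m = i := by
  have := Fintype.card_congr c.equivSigma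
  simpa [Fintype.card_sigma] using this

theorem ofp_dichotomy {i : ℕ} (hi : 1 ≤ i) (c : OrderedFinpartition i) :
    (∀ m, c.partSize m < i) ∨ (c.length = 1 ∧ ∀ m : Fin c.length, c.partSize m = i) := by
  by_cases h : ∀ m, c.partSize m < i
  · exact Or.inl h
  push_neg at h
  obtain ⟨m0, hm0⟩ := h
  have hle : c.partSize m0 = i := le_antisymm (c.partSize_le m0) hm0
  have hlen1 : c.length = 1 := by
    by_contra hne
    have hpos : 0 < c.length := c.length_pos (by omega)
    have h2 : 2 ≤ c.length := by omega
    have hm1 : ∃ m1 : Fin c.length, m1 ≠ m0 := by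
      refine ⟨if h0 : (m0 : ℕ) = 0 then ⟨1, by omega⟩ else ⟨0, by omega⟩, ?_⟩
      split <;> (intro hEq; apply_fun Fin.val at hEq; simp_all)
    obtain ⟨m1, hm1⟩ := hm1
    have := Finset.single_lt_sum (i := m0) (j := m1) hm1 (Finset.mem_univ m0)
      (Finset.mem_univ m1) (c.partSize_pos m1) (fun _ _ _ => Nat.zero_le _)
    rw [ofp_sum c, hle] at this
    omega
  refine Or.inr ⟨hlen1, fun m => ?_⟩
  have h1 : (m : ℕ) < c.length := m.isLt
  have h2 : (m0 : ℕ) < c.length := m0.isLt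
  have : m = m0 := Fin.ext (by omega)
  subst this; exact hle

theorem Dd_eq_of {N : ℕ} {u : Eu N → ℂ} {x : Eu N} {i j : ℕ} (h : j = i)
    (σ : Fin i → Fin N) (τ : Fin j → Fin N) (hτ : ∀ l, τ l = σ (Fin.cast h l)) :
    Dd j τ u x = Dd i σ u x := by
  subst h
  have : τ = σ := funext fun l => by rw [hτ l, Fin.cast_refl, id]
  rw [this]

/-- The nonlinearity `g(z) = |z|^α z`. -/
def gfun (α : ℝ) : ℂ → ℂ := fun z => ((‖z‖ ^ α : ℝ) : ℂ) * z

theorem contDiff_normSq' : ContDiff ℝ (⊤ : ℕ∞) (fun z : ℂ => Complex.normSq z) := by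
  have : (fun z : ℂ => Complex.normSq z) =
      fun z : ℂ => Complex.reCLM z * Complex.reCLM z + Complex.imCLM z * Complex.imCLM z := by
    funext w; simp [Complex.normSq_apply]
  rw [this]
  exact (Complex.reCLM.contDiff.mul Complex.reCLM.contDiff).add
    (Complex.imCLM.contDiff.mul Complex.imCLM.contDiff)

theorem gfun_contDiffOn (α : ℝ) : ContDiffOn ℝ (⊤ : ℕ∞) (gfun α) {z : ℂ | z ≠ 0} := by
  intro z hz
  apply ContDiffWithinAt.mul _ contDiffWithinAt_id
  have hns : Complex.normSq z ≠ 0 := by simpa [Complex.normSq_eq_zero] using hz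
  have h2 : ContDiffAt ℝ (⊤ : ℕ∞) (fun t : ℝ => t ^ (α/2)) (Complex.normSq z) :=
    Real.contDiffAt_rpow_const_of_ne hns
  have h3 : ContDiffAt ℝ (⊤ : ℕ∞) (fun z : ℂ => (Complex.normSq z) ^ (α/2)) z :=
    h2.comp z contDiff_normSq'.contDiffAt
  have heq : (fun z : ℂ => ((‖z‖ ^ α : ℝ) : ℂ)) =
      (fun z : ℂ => ((Complex.normSq z ^ (α/2) : ℝ) : ℂ)) := by
    funext w
    norm_cast
    rw [Complex.norm_def, Real.sqrt_eq_rpow, ← Real.rpow_mul (Complex.normSq_nonneg w)]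
    rw [one_div, inv_mul_eq_div]
  have h4 : ContDiffAt ℝ (⊤ : ℕ∞) (fun z : ℂ => ((Complex.normSq z ^ (α/2) : ℝ) : ℂ)) z :=
    Complex.ofRealCLM.contDiff.contDiffAt.comp z h3
  rw [← heq] at h4
  exact h4.contDiffWithinAt

theorem gfun_smul (α : ℝ) {c : ℝ} (hc : 0 < c) (z : ℂ) :
    gfun α (c • z) = (c ^ (α+1) : ℝ) • gfun α z := by
  simp only [gfun, Complex.real_smul, norm_mul, Complex.norm_real, Real.norm_eq_abs, abs_of_pos hc]
  rw [Real.mul_rpow hc.le (norm_nonneg z), Real.rpow_add_one hc.ne' α]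
  push_cast
  ring

theorem gfun_norm_bound (α : ℝ) (j : ℕ) :
    ∃ K : ℝ, 0 ≤ K ∧ ∀ z : ℂ, z ≠ 0 →
      ‖iteratedFDerivWithin ℝ j (gfun α) {w : ℂ | w ≠ 0} z‖ ≤ K * ‖z‖ ^ (α + 1 - j) := by
  set t : Set ℂ := {w : ℂ | w ≠ 0} with ht_def
  have ht : IsOpen t := isOpen_compl_singleton
  have hu : UniqueDiffOn ℝ t := ht.uniqueDiffOn
  have hcont : ContinuousOn (fun z => iteratedFDerivWithin ℝ j (gfun α) t z) t :=
    (gfun_contDiffOn α).continuousOn_iteratedFDerivWithin (mod_cast le_top) hu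
  obtain ⟨K, hK⟩ := (isCompact_sphere (0:ℂ) 1).exists_bound_of_continuousOn
    (hcont.mono (fun w hw => by
      simp only [ht_def, Set.mem_setOf_eq]
      intro h0
      rw [mem_sphere_iff_norm, h0] at hw
      norm_num at hw))
  have hK0 : 0 ≤ K := le_trans (norm_nonneg _) (hK 1 (by simp))
  refine ⟨K, hK0, fun z hz => ?_⟩
  set c : ℝ := ‖z‖ with hc_def
  have hc : 0 < c := norm_pos_iff.2 hz
  set w : ℂ := c⁻¹ • z with hw_def
  have hwn : ‖w‖ = 1 := by
    rw [hw_def, norm_smul, norm_inv, norm_norm, inv_mul_cancel₀ hc.ne']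
  have hwt : w ∈ t := by
    simp only [ht_def, Set.mem_setOf_eq, hw_def, smul_ne_zero_iff]
    exact ⟨inv_ne_zero hc.ne', hz⟩
  set e : ℂ ≃L[ℝ] ℂ :=
    (LinearEquiv.smulOfNeZero ℝ ℂ c hc.ne').toContinuousLinearEquiv with he_def
  have he_apply : ∀ y : ℂ, e y = c • y := fun y => rfl
  have het : e ⁻¹' t = t := by
    ext y
    simp only [Set.mem_preimage, ht_def, Set.mem_setOf_eq, he_apply, smul_ne_zero_iff]
    constructor
    · exact fun h => h.2
    · exact fun h => ⟨hc.ne', h⟩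
  have hew : e w ∈ t := by
    rw [he_apply, hw_def, smul_smul, mul_inv_cancel₀ hc.ne', one_smul]
    exact hz
  have hcomp := ContinuousLinearEquiv.iteratedFDerivWithin_comp_right e (gfun α) hu hew j
  rw [het] at hcomp
  have hfun : gfun α ∘ e = fun y => (c ^ (α+1) : ℝ) • gfun α y := by
    funext y
    rw [Function.comp_apply, he_apply, gfun_smul α hc]
  rw [hfun] at hcomp
  have hsmul : iteratedFDerivWithin ℝ j (fun y => (c ^ (α+1) : ℝ) • gfun α y) t w
      = (c ^ (α+1) : ℝ) • iteratedFDerivWithin ℝ j (gfun α) t w := by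
    exact iteratedFDerivWithin_const_smul_apply (a := (c ^ (α+1) : ℝ)) ((gfun_contDiffOn α).of_le (mod_cast le_top) w hwt) hu hwt
  rw [hsmul] at hcomp
  have hewz : e w = z := by
    rw [he_apply, hw_def, smul_smul, mul_inv_cancel₀ hc.ne', one_smul]
  rw [hewz] at hcomp
  apply ContinuousMultilinearMap.opNorm_le_bound
  · positivity
  intro u
  have key : iteratedFDerivWithin ℝ j (gfun α) t z u
      = (c ^ (α+1) : ℝ) • ((∏ _m : Fin j, c⁻¹) • iteratedFDerivWithin ℝ j (gfun α) t w u) := by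
    have happ := congrFun (congrArg DFunLike.coe hcomp) (fun m => c⁻¹ • u m)
    simp only [ContinuousMultilinearMap.smul_apply,
      ContinuousMultilinearMap.compContinuousLinearMap_apply] at happ
    have h1 : (fun i : Fin j => e (c⁻¹ • u i)) = u := by
      funext i
      rw [he_apply, smul_smul, mul_inv_cancel₀ hc.ne', one_smul]
    simp only [ContinuousLinearEquiv.coe_coe] at happ
    rw [h1] at happ
    rw [← happ, (iteratedFDerivWithin ℝ j (gfun α) t w).map_smul_univ (fun _ => c⁻¹) u]
  rw [key]
  have hprod : (∏ _m : Fin j, c⁻¹) = c⁻¹ ^ j := by simp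
  rw [hprod, norm_smul, norm_smul]
  have hle : ‖iteratedFDerivWithin ℝ j (gfun α) t w u‖
      ≤ K * ∏ m, ‖u m‖ := by
    refine le_trans ((iteratedFDerivWithin ℝ j (gfun α) t w).le_opNorm u) ?_
    have := hK w (by rw [mem_sphere_iff_norm, sub_zero]; exact hwn)
    exact mul_le_mul_of_nonneg_right this (Finset.prod_nonneg fun m _ => norm_nonneg _)
  have hnorm1 : ‖(c ^ (α+1) : ℝ)‖ = c ^ (α+1) := by
    rw [Real.norm_eq_abs, _root_.abs_of_nonneg (Real.rpow_nonneg hc.le _)]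
  have hnorm2 : ‖(c⁻¹ ^ j : ℝ)‖ = c⁻¹ ^ j := by
    rw [Real.norm_eq_abs, _root_.abs_of_nonneg (by positivity)]
  rw [hnorm1, hnorm2]
  have hexp : c ^ (α+1) * c⁻¹ ^ j = c ^ (α + 1 - j) := by
    rw [← Real.rpow_natCast c⁻¹ j, Real.inv_rpow hc.le, ← Real.rpow_neg hc.le,
      ← Real.rpow_add hc]
    ring_nf
  calc c ^ (α+1) * (c⁻¹ ^ j * ‖iteratedFDerivWithin ℝ j (gfun α) t w u‖)
      ≤ c ^ (α+1) * (c⁻¹ ^ j * (K * ∏ m, ‖u m‖)) := by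
        have h2 : (0:ℝ) ≤ c ^ (α+1) := Real.rpow_nonneg hc.le _
        have h3 : (0:ℝ) ≤ c⁻¹ ^ j := by positivity
        exact mul_le_mul_of_nonneg_left (mul_le_mul_of_nonneg_left hle h3) h2
    _ = K * c ^ (α + 1 - j) * ∏ m, ‖u m‖ := by
        rw [← hexp]; ring

theorem iteratedFDeriv_gfun_comp {N : ℕ} (α : ℝ) {Mn : ℕ} {v : Eu N → ℂ}
    (hv : ContDiff ℝ (Mn : ℕ∞) v) (hvne : ∀ x, v x ≠ 0) {i : ℕ} (hi : i ≤ Mn) (x : Eu N) :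
    iteratedFDeriv ℝ i (gfun α ∘ v) x =
      ∑ c : OrderedFinpartition i,
        c.compAlongOrderedFinpartition
          (iteratedFDerivWithin ℝ c.length (gfun α) {w : ℂ | w ≠ 0} (v x))
          (fun m => iteratedFDeriv ℝ (c.partSize m) v x) := by
  have hu : UniqueDiffOn ℝ {w : ℂ | w ≠ 0} :=
    (isOpen_compl_singleton (x := (0:ℂ))).uniqueDiffOn
  have hg : HasFTaylorSeriesUpToOn (i : ℕ∞) (gfun α)
      (ftaylorSeriesWithin ℝ (gfun α) {w : ℂ | w ≠ 0}) {w : ℂ | w ≠ 0} :=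
    ((gfun_contDiffOn α).of_le (mod_cast le_top)).ftaylorSeriesWithin hu
  have hf : HasFTaylorSeriesUpToOn (i : ℕ∞) v (ftaylorSeries ℝ v) Set.univ := by
    rw [hasFTaylorSeriesUpToOn_univ_iff]
    exact contDiff_iff_ftaylorSeries.mp (hv.of_le (by exact_mod_cast hi))
  have hmaps : Set.MapsTo v Set.univ {w : ℂ | w ≠ 0} := fun y _ => hvne y
  have H := hg.comp hf hmaps
  have heq := H.eq_iteratedFDerivWithin_of_uniqueDiffOn (m := i)
    (by exact_mod_cast le_refl (i:ℕ)) uniqueDiffOn_univ (Set.mem_univ x)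
  rw [iteratedFDerivWithin_univ] at heq
  rw [← heq]
  rfl

theorem jap_one_le {N : ℕ} (x : Eu N) : 1 ≤ jap x := by
  rw [jap]
  calc (1:ℝ) = (1:ℝ) ^ ((1:ℝ)/2) := (Real.one_rpow _).symm
    _ ≤ (1 + ‖x‖^2) ^ ((1:ℝ)/2) :=
        Real.rpow_le_rpow zero_le_one (by nlinarith [sq_nonneg ‖x‖]) (by norm_num)

theorem jap_pos {N : ℕ} (x : Eu N) : 0 < jap x := lt_of_lt_of_le one_pos (jap_one_le x)

theorem wt_norm {N : ℕ} (a : ℕ) (f : Eu N → ℂ) (x : Eu N) :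
    ‖wt a f x‖ = jap x ^ a * ‖f x‖ := by
  rw [wt, norm_mul, Complex.norm_real, Real.norm_eq_abs,
    _root_.abs_of_nonneg (pow_nonneg (jap_pos x).le a)]

theorem ae_le_wnorm {N : ℕ} {a : ℕ} {f : Eu N → ℂ} (hf : MemLp (wt a f) ⊤ volume) :
    ∀ᵐ x ∂(volume : Measure (Eu N)), jap x ^ a * ‖f x‖ ≤ wnorm a ⊤ f := by
  filter_upwards [ae_le_eLpNormEssSup (f := wt a f) (μ := (volume : Measure (Eu N)))] with x hx
  have hfin : eLpNormEssSup (wt a f) volume ≠ ⊤ := by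
    rw [← eLpNorm_exponent_top]
    exact hf.2.ne
  rw [← wt_norm, wnorm, eLpNorm_exponent_top]
  calc ‖wt a f x‖ = ((‖wt a f x‖₊ : ℝ≥0∞)).toReal := by simp
    _ ≤ (eLpNormEssSup (wt a f) volume).toReal := ENNReal.toReal_mono hfin hx

end AuxNonlin

end
/-- **Proposition 2.3 (ii)**: estimate (2.6) of the nonlinearity `|v|^α v`, for
`2 ≤ |β| ≤ 2m`. -/
theorem nonlinearity_estimate_mid
    (N k n m : ℕ) (hN : 1 ≤ N) (hk : (N : ℝ)/2 < k) (hn1 : (N : ℝ)/2 + 1 < n)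
    (hn2 : (N : ℝ)*((N : ℝ)+1)/4 < n) (hm : k + n + 1 ≤ 2*m)
    (α : ℝ) (hα : 0 < α) (hn3 : (N : ℝ)/(2*α) ≤ n) :
    ∃ C₂ : ℝ, 1 ≤ C₂ ∧
      ∀ η : ℝ, 0 < η → ∀ v : Eu N → ℂ, MemX N k n m v → 1 ≤ η * infv n v →
      ∀ i : ℕ, 2 ≤ i → i ≤ 2*m → ∀ σ : Fin i → Fin N,
        eLpNorm (wt n (Dd i σ (fun y => Complex.ofReal (‖v y‖ ^ α) * v y)))
            ⊤ volume
          ≤ ENNReal.ofReal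
              (C₂ * (eLpNorm v ⊤ volume).toReal ^ α * wnorm n ⊤ (Dd i σ v)
               + C₂ * (eLpNorm v ⊤ volume).toReal ^ α
                   * (η * snorm1 N n (i-1) v) ^ (2*i) * snorm1 N n (i-1) v) := by
  classical
  choose Kf hKf0 hKfb using fun j : ℕ => gfun_norm_bound α j
  set Kc : ℝ := 1 + ∑ j ∈ Finset.range (2*m+1), Kf j with hKc_def
  have hsum0 : 0 ≤ ∑ j ∈ Finset.range (2*m+1), Kf j :=
    Finset.sum_nonneg fun j _ => hKf0 j
  have hKc1 : 1 ≤ Kc := by rw [hKc_def]; linarith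
  have hKfle : ∀ j, j ≤ 2*m → Kf j ≤ Kc := by
    intro j hj
    have h1 : Kf j ≤ ∑ j ∈ Finset.range (2*m+1), Kf j :=
      Finset.single_le_sum (fun j _ => hKf0 j) (Finset.mem_range.mpr (by omega))
    rw [hKc_def]; linarith
  set A : ℝ := ∑ i' ∈ Finset.range (2*m+1), (Fintype.card (OrderedFinpartition i') : ℝ)
    with hA_def
  have hA0 : 0 ≤ A := Finset.sum_nonneg fun _ _ => Nat.cast_nonneg _
  have hAcard : ∀ i', i' ≤ 2*m → (Fintype.card (OrderedFinpartition i') : ℝ) ≤ A := by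
    intro i' hi'
    rw [hA_def]
    exact Finset.single_le_sum (f := fun j => (Fintype.card (OrderedFinpartition j) : ℝ))
      (fun _ _ => Nat.cast_nonneg _) (Finset.mem_range.mpr (by omega))
  refine ⟨1 + A * Kc, by nlinarith, ?_⟩
  intro η hη v hX hinf i hi2 him σ
  obtain ⟨hsmooth, hL2, hLinf, hmid, hhigh⟩ := hX
  -- basic positivity
  have hjapn1 : ∀ x : Eu N, 1 ≤ jap x ^ n := fun x => one_le_pow₀ (jap_one_le x)
  -- lower bounds on v
  have hIη : η⁻¹ ≤ infv n v := by
    rw [← mul_le_mul_iff_right₀ hη, mul_inv_cancel₀ hη.ne']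
    exact hinf
  have hbdd : BddBelow (Set.range fun x : Eu N => jap x ^ n * ‖v x‖) := by
    refine ⟨0, fun y hy => ?_⟩
    obtain ⟨x, rfl⟩ := hy
    have := jap_pos x
    positivity
  have hlow : ∀ x, η⁻¹ ≤ jap x ^ n * ‖v x‖ := by
    intro x
    have := ciInf_le hbdd x
    rw [infv] at hIη
    calc η⁻¹ ≤ ⨅ x : Eu N, jap x ^ n * ‖v x‖ := hIη
      _ ≤ jap x ^ n * ‖v x‖ := ciInf_le hbdd x
      _ = jap x ^ n * ‖v x‖ := rfl
  have hvne : ∀ x, v x ≠ 0 := by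
    intro x h0
    have h := hlow x
    rw [h0] at h
    simp only [norm_zero, mul_zero] at h
    have : (0:ℝ) < η⁻¹ := by positivity
    linarith
  have hlow' : ∀ x, (η * jap x ^ n)⁻¹ ≤ ‖v x‖ := by
    intro x
    have hjp : (0:ℝ) < jap x ^ n := pow_pos (jap_pos x) n
    have h := hlow x
    calc (η * jap x ^ n)⁻¹ = η⁻¹ * (jap x ^ n)⁻¹ := by rw [mul_inv]
      _ ≤ (jap x ^ n * ‖v x‖) * (jap x ^ n)⁻¹ :=
          mul_le_mul_of_nonneg_right h (by positivity)
      _ = ‖v x‖ := by field_simp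
  -- the three norms
  set Mv : ℝ := (eLpNorm v ⊤ volume).toReal with hMv_def
  set W : ℝ := wnorm n ⊤ (Dd i σ v) with hW_def
  set S : ℝ := snorm1 N n (i-1) v with hS_def
  have hMv0 : 0 ≤ Mv := ENNReal.toReal_nonneg
  have hW0 : 0 ≤ W := ENNReal.toReal_nonneg
  -- v ∈ L^∞
  have hDd0 : Dd 0 (fun l : Fin 0 => l.elim0) v = v := by
    funext x
    rw [Dd, iteratedFDeriv_zero_apply]
  have hmem0 : MemLp (wt n (Dd 0 (fun l : Fin 0 => l.elim0) v)) ⊤ volume :=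
    hLinf 0 (by omega) _
  have hmemv : MemLp v ⊤ volume := by
    refine hmem0.of_le (hsmooth.continuous.aestronglyMeasurable)
      (Filter.Eventually.of_forall fun x => ?_)
    rw [hDd0, wt_norm]
    have h1 := hjapn1 x
    nlinarith [norm_nonneg (v x)]
  have haev : ∀ᵐ x ∂(volume : Measure (Eu N)), ‖v x‖ ≤ Mv := by
    have hfin : eLpNormEssSup v volume ≠ ⊤ := by
      rw [← eLpNorm_exponent_top]
      exact hmemv.2.ne
    filter_upwards [ae_le_eLpNormEssSup (f := v) (μ := (volume : Measure (Eu N)))] with x hx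
    rw [hMv_def, eLpNorm_exponent_top]
    calc ‖v x‖ = ((‖v x‖₊ : ℝ≥0∞)).toReal := by simp
      _ ≤ _ := ENNReal.toReal_mono hfin hx
  -- S bounds
  have hwnorm_le_S : ∀ (j : ℕ), j < i → ∀ (σ' : Fin j → Fin N), wnorm n ⊤ (Dd j σ' v) ≤ S := by
    intro j hj σ'
    have hj' : j < (i-1)+1 := by omega
    calc wnorm n ⊤ (Dd j σ' v)
        ≤ ⨆ σ'' : Fin ((⟨j, hj'⟩ : Fin (i-1+1)) : ℕ) → Fin N,
            wnorm n ⊤ (Dd ((⟨j, hj'⟩ : Fin (i-1+1)) : ℕ) σ'' v) :=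
          le_ciSup (f := fun σ'' : Fin (((⟨j, hj'⟩ : Fin (i-1+1))) : ℕ) → Fin N =>
            wnorm n ⊤ (Dd (((⟨j, hj'⟩ : Fin (i-1+1))) : ℕ) σ'' v))
            (Set.Finite.bddAbove (Set.finite_range _)) σ'
      _ ≤ S := by
        rw [hS_def, snorm1]
        exact le_ciSup (f := fun jj : Fin (i-1+1) =>
          ⨆ σ'' : Fin (jj:ℕ) → Fin N, wnorm n ⊤ (Dd (jj:ℕ) σ'' v))
          (Set.Finite.bddAbove (Set.finite_range _)) (⟨j, hj'⟩ : Fin (i-1+1))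
  have hS0 : 0 ≤ S :=
    le_trans ENNReal.toReal_nonneg (hwnorm_le_S 0 (by omega) (fun l => l.elim0))
  -- infv ≤ S
  have hinf_le_S : infv n v ≤ S := by
    have hμ : (volume : Measure (Eu N)) ≠ 0 := by
      have h1 : (volume : Measure (Eu N)) Set.univ ≠ 0 :=
        (isOpen_univ.measure_ne_zero volume Set.univ_nonempty)
      intro h
      rw [h] at h1
      simp at h1
    have hne : (ae (volume : Measure (Eu N))).NeBot := ae_neBot.2 hμ
    obtain ⟨x₀, hx₀⟩ := (ae_le_wnorm hmem0).exists
    calc infv n v ≤ jap x₀ ^ n * ‖v x₀‖ := ciInf_le hbdd x₀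
      _ = jap x₀ ^ n * ‖Dd 0 (fun l : Fin 0 => l.elim0) v x₀‖ := by
          rw [hDd0]
      _ ≤ wnorm n ⊤ (Dd 0 (fun l : Fin 0 => l.elim0) v) := hx₀
      _ ≤ S := hwnorm_le_S 0 (by omega) _
  have hηS : 1 ≤ η * S :=
    le_trans hinf (mul_le_mul_of_nonneg_left hinf_le_S hη.le)
  -- a.e. bounds
  have hmemW : MemLp (wt n (Dd i σ v)) ⊤ volume := hLinf i (by omega) σ
  have haeW : ∀ᵐ x ∂(volume : Measure (Eu N)), jap x ^ n * ‖Dd i σ v x‖ ≤ W :=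
    ae_le_wnorm hmemW
  have haeS : ∀ᵐ x ∂(volume : Measure (Eu N)), ∀ (j : Fin i) (σ' : Fin (j:ℕ) → Fin N),
      jap x ^ n * ‖Dd (j:ℕ) σ' v x‖ ≤ S := by
    rw [ae_all_iff]
    intro j
    rw [ae_all_iff]
    intro σ'
    filter_upwards [ae_le_wnorm (hLinf (j:ℕ) (by omega) σ')] with x hx
    exact hx.trans (hwnorm_le_S (j:ℕ) j.isLt σ')
  -- final bound
  rw [eLpNorm_exponent_top]
  apply eLpNormEssSup_le_of_ae_bound (C := (1 + A * Kc) * Mv ^ α * W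
    + (1 + A * Kc) * Mv ^ α * (η * S) ^ (2*i) * S)
  filter_upwards [haev, haeW, haeS] with x hxv hxW hxS
  have hfeq : (fun y => ((‖v y‖ ^ α : ℝ) : ℂ) * v y) = gfun α ∘ v := rfl
  have hvc : ContDiff ℝ ((2*m+2+k+n : ℕ) : ℕ∞) v := by exact_mod_cast hsmooth
  set T : OrderedFinpartition i → ℂ := fun c =>
    (c.compAlongOrderedFinpartition
      (iteratedFDerivWithin ℝ c.length (gfun α) {w : ℂ | w ≠ 0} (v x))
      (fun m => iteratedFDeriv ℝ (c.partSize m) v x))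
    (fun j => EuclideanSpace.single (σ j) 1) with hT_def
  have hexpand : Dd i σ (fun y => ((‖v y‖ ^ α : ℝ) : ℂ) * v y) x
      = ∑ c : OrderedFinpartition i, T c := by
    rw [Dd, hfeq, iteratedFDeriv_gfun_comp α hvc hvne (by omega) x,
      ContinuousMultilinearMap.sum_apply]
  rw [wt_norm, hexpand]
  set J : ℝ := jap x ^ n with hJ_def
  have hJpos : 0 < J := pow_pos (jap_pos x) n
  have hvx : (0:ℝ) < ‖v x‖ := norm_pos_iff.2 (hvne x)
  have hBα : ‖v x‖ ^ α ≤ Mv ^ α := Real.rpow_le_rpow (norm_nonneg _) hxv hα.le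
  have hMvα : (0:ℝ) ≤ Mv ^ α := Real.rpow_nonneg hMv0 α
  have hpow0 : (0:ℝ) ≤ (η * S) ^ (2*i) := by positivity
  have hT1 : (0:ℝ) ≤ Kc * Mv ^ α * W := by positivity
  have hT2 : (0:ℝ) ≤ Kc * Mv ^ α * (η * S) ^ (2*i) * S := by positivity
  have hterm : ∀ c : OrderedFinpartition i,
      J * ‖T c‖
        ≤ Kc * Mv ^ α * W + Kc * Mv ^ α * (η * S) ^ (2*i) * S := by
    intro c
    set p := c.length with hp_def
    have hp1 : 1 ≤ p := c.length_pos (by omega)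
    have hpi : p ≤ i := c.length_le
    have hgb := hKfb p (v x) (hvne x)
    have hnorm1 : ‖T c‖
        ≤ ‖iteratedFDerivWithin ℝ c.length (gfun α) {w : ℂ | w ≠ 0} (v x)‖
          * ∏ m, ‖Dd (c.partSize m) (σ ∘ c.emb m) v x‖ := by
      simp only [hT_def, OrderedFinpartition.compAlongOrderFinpartition_apply]
      exact (iteratedFDerivWithin ℝ c.length (gfun α) {w : ℂ | w ≠ 0} (v x)).le_opNorm _
    rcases ofp_dichotomy (by omega) c with hsmall | ⟨hlen, hpart⟩
    · -- all parts of size < i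
      have hfac : ∀ m, ‖Dd (c.partSize m) (σ ∘ c.emb m) v x‖ ≤ S / J := by
        intro m
        have h := hxS ⟨c.partSize m, hsmall m⟩ (σ ∘ c.emb m)
        rw [le_div_iff₀ hJpos]
        calc ‖Dd (c.partSize m) (σ ∘ c.emb m) v x‖ * J
            = J * ‖Dd (c.partSize m) (σ ∘ c.emb m) v x‖ := mul_comm _ _
          _ ≤ S := h
      have hprod : ∏ m, ‖Dd (c.partSize m) (σ ∘ c.emb m) v x‖ ≤ (S / J) ^ p := by
        calc ∏ m, ‖Dd (c.partSize m) (σ ∘ c.emb m) v x‖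
            ≤ ∏ _m : Fin c.length, (S / J) :=
              Finset.prod_le_prod (fun m _ => norm_nonneg _) (fun m _ => hfac m)
          _ = (S / J) ^ p := by rw [Finset.prod_const, Finset.card_univ, Fintype.card_fin]
      have hsplit : ‖v x‖ ^ (α + 1 - (p:ℝ)) = ‖v x‖ ^ α * (‖v x‖⁻¹) ^ (p - 1) := by
        rw [show α + 1 - (p:ℝ) = α + (1 - (p:ℝ)) by ring, Real.rpow_add hvx]
        congr 1
        rw [show (1:ℝ) - (p:ℝ) = -(((p-1:ℕ)):ℝ) by rw [Nat.cast_sub hp1]; push_cast; ring]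
        rw [Real.rpow_neg hvx.le, Real.rpow_natCast, inv_pow]
      have hinv : ‖v x‖⁻¹ ≤ η * J := by
        have h := hlow' x
        have hpos : (0:ℝ) < (η * J)⁻¹ := by positivity
        calc ‖v x‖⁻¹ ≤ ((η * J)⁻¹)⁻¹ := inv_anti₀ hpos h
          _ = η * J := inv_inv _
      have hinvpow : (‖v x‖⁻¹) ^ (p-1) ≤ (η * J) ^ (p-1) :=
        pow_le_pow_left₀ (inv_nonneg.2 hvx.le) hinv _
      have hJ0 : J ≠ 0 := hJpos.ne'
      have hJJ : J ^ (p-1) * J = J ^ p := by rw [← pow_succ]; congr 1; omega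
      have hSS : S ^ (p-1) * S = S ^ p := by rw [← pow_succ]; congr 1; omega
      have hprod0 : (0:ℝ) ≤ ∏ m, ‖Dd (c.partSize m) (σ ∘ c.emb m) v x‖ :=
        Finset.prod_nonneg fun m _ => norm_nonneg _
      have hGnn : (0:ℝ) ≤ Kf p * ‖v x‖ ^ (α + 1 - (p:ℝ)) :=
        mul_nonneg (hKf0 p) (Real.rpow_nonneg hvx.le _)
      have step1 : J * ‖T c‖
          ≤ J * ((Kf p * (‖v x‖ ^ α * (‖v x‖⁻¹) ^ (p-1))) * (S / J) ^ p) := by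
        rw [← hsplit]
        refine mul_le_mul_of_nonneg_left ?_ hJpos.le
        exact le_trans hnorm1 (mul_le_mul hgb hprod hprod0 hGnn)
      have step2 : J * ((Kf p * (‖v x‖ ^ α * (‖v x‖⁻¹) ^ (p-1))) * (S / J) ^ p)
          ≤ J * ((Kf p * (Mv ^ α * (η * J) ^ (p-1))) * (S / J) ^ p) := by
        have hdp : (0:ℝ) ≤ (S / J) ^ p := by positivity
        have h1 : ‖v x‖ ^ α * (‖v x‖⁻¹) ^ (p-1) ≤ Mv ^ α * (η * J) ^ (p-1) :=
          mul_le_mul hBα hinvpow (by positivity) hMvα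
        exact mul_le_mul_of_nonneg_left
          (mul_le_mul_of_nonneg_right (mul_le_mul_of_nonneg_left h1 (hKf0 p)) hdp)
          hJpos.le
      have step3 : J * ((Kf p * (Mv ^ α * (η * J) ^ (p-1))) * (S / J) ^ p)
          = Kf p * Mv ^ α * (η * S) ^ (p-1) * S := by
        rw [div_pow, mul_pow]
        calc J * ((Kf p * (Mv ^ α * (η ^ (p-1) * J ^ (p-1)))) * (S ^ p / J ^ p))
            = (Kf p * Mv ^ α * η ^ (p-1) * S ^ p) * ((J ^ (p-1) * J) / J ^ p) := by ring
          _ = Kf p * Mv ^ α * η ^ (p-1) * S ^ p := by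
              rw [hJJ, div_self (pow_ne_zero _ hJ0), mul_one]
          _ = Kf p * Mv ^ α * (η ^ (p-1) * S ^ (p-1)) * S := by rw [← hSS]; ring
          _ = Kf p * Mv ^ α * (η * S) ^ (p-1) * S := by rw [mul_pow]
      have step4 : Kf p * Mv ^ α * (η * S) ^ (p-1) * S
          ≤ Kc * Mv ^ α * (η * S) ^ (2*i) * S := by
        have h1 : (η * S) ^ (p-1) ≤ (η * S) ^ (2*i) :=
          pow_le_pow_right₀ hηS (by omega)
        have h2 : Kf p ≤ Kc := hKfle p (by omega)
        have hKc0 : (0:ℝ) ≤ Kc := le_trans zero_le_one hKc1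
        refine mul_le_mul_of_nonneg_right ?_ hS0
        refine mul_le_mul ?_ h1 (by positivity) (mul_nonneg hKc0 hMvα)
        exact mul_le_mul_of_nonneg_right h2 hMvα
      calc J * ‖T c‖
          ≤ Kc * Mv ^ α * (η * S) ^ (2*i) * S :=
            le_trans step1 (le_trans step2 (le_of_eq_of_le step3 step4))
        _ ≤ Kc * Mv ^ α * W + Kc * Mv ^ α * (η * S) ^ (2*i) * S :=
            le_add_of_nonneg_left hT1
    · -- single block
      have hfac : ∀ m : Fin c.length, Dd (c.partSize m) (σ ∘ c.emb m) v x = Dd i σ v x := by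
        intro m
        refine Dd_eq_of (hpart m) σ _ (fun l => ?_)
        show σ (c.emb m l) = σ (Fin.cast (hpart m) l)
        congr 1
        have hFsm : StrictMono (fun l' : Fin i => c.emb m (Fin.cast (hpart m).symm l')) :=
          (c.emb_strictMono m).comp (Fin.cast_strictMono _)
        have hFid := fin_strictMono_id' _ hFsm
        have h2 : Fin.cast (hpart m).symm (Fin.cast (hpart m) l) = l := by
          apply Fin.ext; simp
        have h3 := congrFun hFid (Fin.cast (hpart m) l)
        simp only [id] at h3
        rw [h2] at h3
        exact h3
      have hprod : ∏ m, ‖Dd (c.partSize m) (σ ∘ c.emb m) v x‖ = ‖Dd i σ v x‖ := by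
        calc ∏ m, ‖Dd (c.partSize m) (σ ∘ c.emb m) v x‖
            = ∏ _m : Fin c.length, ‖Dd i σ v x‖ :=
              Finset.prod_congr rfl (fun m _ => by rw [hfac m])
          _ = ‖Dd i σ v x‖ ^ c.length := by
              rw [Finset.prod_const, Finset.card_univ, Fintype.card_fin]
          _ = ‖Dd i σ v x‖ := by rw [hlen, pow_one]
      have hexp1 : α + 1 - (p:ℝ) = α := by
        rw [hp_def, hlen]; push_cast; ring
      rw [hexp1] at hgb
      calc J * ‖T c‖
          ≤ J * ((Kf p * ‖v x‖ ^ α) * ‖Dd i σ v x‖) := by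
            refine mul_le_mul_of_nonneg_left ?_ hJpos.le
            rw [← hprod]
            exact le_trans hnorm1 (mul_le_mul_of_nonneg_right hgb
              (Finset.prod_nonneg fun m _ => norm_nonneg _))
        _ = (Kf p * ‖v x‖ ^ α) * (J * ‖Dd i σ v x‖) := by ring
        _ ≤ (Kc * Mv ^ α) * W := by
            refine mul_le_mul ?_ hxW (by positivity) (by positivity)
            exact mul_le_mul (hKfle p (by omega)) hBα (Real.rpow_nonneg hvx.le α)
              (le_trans zero_le_one hKc1)
        _ = Kc * Mv ^ α * W := by ring
        _ ≤ Kc * Mv ^ α * W + Kc * Mv ^ α * (η * S) ^ (2*i) * S :=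
            le_add_of_nonneg_right hT2
  calc J * ‖∑ c : OrderedFinpartition i, T c‖
      ≤ J * ∑ c : OrderedFinpartition i, ‖T c‖ :=
        mul_le_mul_of_nonneg_left (norm_sum_le _ _) hJpos.le
    _ = ∑ c : OrderedFinpartition i, J * ‖T c‖ := Finset.mul_sum _ _ _
    _ ≤ ∑ _c : OrderedFinpartition i,
          (Kc * Mv ^ α * W + Kc * Mv ^ α * (η * S) ^ (2*i) * S) :=
        Finset.sum_le_sum (fun c _ => hterm c)
    _ = (Fintype.card (OrderedFinpartition i) : ℝ)
          * (Kc * Mv ^ α * W + Kc * Mv ^ α * (η * S) ^ (2*i) * S) := by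
        rw [Finset.sum_const, Finset.card_univ, nsmul_eq_mul]
    _ ≤ A * (Kc * Mv ^ α * W + Kc * Mv ^ α * (η * S) ^ (2*i) * S) :=
        mul_le_mul_of_nonneg_right (hAcard i (by omega)) (by linarith)
    _ ≤ (1 + A * Kc) * Mv ^ α * W + (1 + A * Kc) * Mv ^ α * (η * S) ^ (2*i) * S := by
        have h1 : A * Kc ≤ 1 + A * Kc := by linarith
        have e1 : A * (Kc * Mv ^ α * W + Kc * Mv ^ α * (η * S) ^ (2*i) * S)
            = (A * Kc) * (Mv ^ α * W) + (A * Kc) * (Mv ^ α * ((η * S) ^ (2*i) * S)) := by ring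
        rw [e1]
        have h2 : (0:ℝ) ≤ Mv ^ α * W := mul_nonneg hMvα hW0
        have h3 : (0:ℝ) ≤ Mv ^ α * ((η * S) ^ (2*i) * S) :=
          mul_nonneg hMvα (mul_nonneg hpow0 hS0)
        calc (A * Kc) * (Mv ^ α * W) + (A * Kc) * (Mv ^ α * ((η * S) ^ (2*i) * S))
            ≤ (1 + A * Kc) * (Mv ^ α * W) + (1 + A * Kc) * (Mv ^ α * ((η * S) ^ (2*i) * S)) :=
              add_le_add (mul_le_mul_of_nonneg_right h1 h2) (mul_le_mul_of_nonneg_right h1 h3)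
          _ = (1 + A * Kc) * Mv ^ α * W + (1 + A * Kc) * Mv ^ α * (η * S) ^ (2*i) * S := by
              ring
end

section
/- Let N ≥ 1 be an integer, 0 < α < 2/N, b > 0, K ≥ 1, M > 0 and σ > 0. Let 0 < T < 1/b and let t' ∈ (0, 1/b) be defined by (1−bt')^{(2−Nα)/2} = 1/2. Suppose g : [0,T) → [0,∞) is measurable and satisfies g(s) ≤ (4K)^α for all s ∈ [0,T), and g(s) ≤ (b(2−Nα)/(2αM)) · (1−bs)^{(2−Nα)/2}/(1 − (1−bs)^{(2−Nα)/2}) for all s ∈ [t', T). Then for every 0 ≤ t < T: ∫₀ᵗ (1−bs)^{−(4−Nα)/2 − σ} g(s) ds ≤ (2(4K)^α/(bσ) + (2−Nα)/(σαM)) (1−bt)^{−σ}. -/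
/-!
Write `β = (2 - Nα)/2` and split the integrand as `(1-bs)^(-1-σ) · g(s)/(1-bs)^β`.
The second factor is at most `2((4K)^α + c)`, with `c = b(2-Nα)/(2αM)`: before `t'` because
`(1-bs)^β ≥ 1/2`, after `t'` because `x/(1-x) ≤ 2x` for `x = (1-bs)^β ≤ 1/2`.
What remains is the explicit integral
`∫₀ᵗ (1-bs)^(-1-σ) ds = ((1-bt)^(-σ) - 1)/(bσ) ≤ (1-bt)^(-σ)/(bσ)`.
-/

open MeasureTheory Filter Complex
open scoped FourierTransform ENNReal Topology Real

open Set

lemma div_le_two_mul_add_of_le_half {x g A c : ℝ} (hx : 0 < x) (hg : 0 ≤ g) (hgA : g ≤ A)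
    (hc : 0 ≤ c) (hsmall : x ≤ 1 / 2 → g ≤ c * (x / (1 - x))) : g / x ≤ 2 * (A + c) := by
  rw [div_le_iff₀ hx]
  rcases le_or_gt x (1 / 2) with hx2 | hx2
  · have hfrac : c * (x / (1 - x)) ≤ 2 * c * x := by
      rw [mul_div_assoc', div_le_iff₀ (by linarith)]
      nlinarith [mul_nonneg (mul_nonneg hc hx.le) (by linarith : 0 ≤ 1 - 2 * x)]
    nlinarith [hsmall hx2, hfrac]
  · nlinarith

lemma rpow_sub_mul_le {r β γ g A c : ℝ} (hr : 0 < r) (hg : 0 ≤ g) (hgA : g ≤ A)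
    (hc : 0 ≤ c) (hsmall : r ^ β ≤ 1 / 2 → g ≤ c * (r ^ β / (1 - r ^ β))) :
    r ^ (γ - β) * g ≤ 2 * (A + c) * r ^ γ :=
  calc r ^ (γ - β) * g = r ^ γ * (g / r ^ β) := by rw [Real.rpow_sub hr]; ring
    _ ≤ r ^ γ * (2 * (A + c)) := by
        gcongr
        exact div_le_two_mul_add_of_le_half (by positivity) hg hgA hc hsmall
    _ = 2 * (A + c) * r ^ γ := mul_comm _ _

lemma integral_one_sub_mul_rpow_neg_one_sub {b σ t : ℝ} (hb : b ≠ 0) (hσ : σ ≠ 0)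
    (ht : 0 < 1 - b * t) :
    ∫ s in (0 : ℝ)..t, (1 - b * s) ^ (-1 - σ) = ((1 - b * t) ^ (-σ) - 1) / (b * σ) := by
  have h0 : (0 : ℝ) ∉ uIcc (1 - b * t) (1 - b * 0) := by
    rw [mul_zero, sub_zero, mem_uIcc]
    rintro (⟨h, -⟩ | ⟨h, -⟩) <;> linarith
  rw [intervalIntegral.integral_comp_sub_mul (fun x => x ^ (-1 - σ)) hb,
    integral_rpow (Or.inr ⟨by simpa using hσ, h0⟩), show -1 - σ + 1 = -σ by ring]
  simp only [smul_eq_mul, mul_zero, sub_zero, Real.one_rpow]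
  field_simp
  ring

lemma intervalIntegral_mono_of_nonneg {f g : ℝ → ℝ} {a b : ℝ} (hab : a ≤ b)
    (hf : ∀ x ∈ Icc a b, 0 ≤ f x) (hg : IntervalIntegrable g volume a b)
    (h : ∀ x ∈ Icc a b, f x ≤ g x) : ∫ x in a..b, f x ≤ ∫ x in a..b, g x := by
  rw [intervalIntegral.integral_of_le hab, intervalIntegral.integral_of_le hab]
  exact integral_mono_of_nonneg
    (ae_restrict_of_forall_mem measurableSet_Ioc fun x hx => hf x (Ioc_subset_Icc_self hx)) hg.1
    (ae_restrict_of_forall_mem measurableSet_Ioc fun x hx => h x (Ioc_subset_Icc_self hx))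

lemma intervalIntegral_le_of_le_mul_one_sub_mul_rpow {f : ℝ → ℝ} {b σ t C : ℝ} (hb : 0 < b)
    (hσ : 0 < σ) (ht : 0 ≤ t) (htb : b * t < 1) (hf0 : ∀ s ∈ Icc 0 t, 0 ≤ f s)
    (hf : ∀ s ∈ Icc 0 t, f s ≤ C * (1 - b * s) ^ (-1 - σ)) :
    ∫ s in (0 : ℝ)..t, f s ≤ C / (b * σ) * (1 - b * t) ^ (-σ) := by
  have hpos : ∀ s ∈ uIcc 0 t, 0 < 1 - b * s := fun s hs => by
    rw [uIcc_of_le ht] at hs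
    nlinarith [hs.2]
  have hC : 0 ≤ C := by
    simpa using (hf0 0 ⟨le_rfl, ht⟩).trans (hf 0 ⟨le_rfl, ht⟩)
  have hint : IntervalIntegrable (fun s => C * (1 - b * s) ^ (-1 - σ)) volume 0 t := by
    refine ContinuousOn.intervalIntegrable fun s hs => ?_
    exact (((continuous_const.sub (continuous_const.mul continuous_id)).continuousAt.rpow_const
      (Or.inl (hpos s hs).ne')).const_mul C).continuousWithinAt
  calc ∫ s in (0 : ℝ)..t, f s ≤ ∫ s in (0 : ℝ)..t, C * (1 - b * s) ^ (-1 - σ) :=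
        intervalIntegral_mono_of_nonneg ht hf0 hint hf
    _ = C / (b * σ) * ((1 - b * t) ^ (-σ) - 1) := by
        rw [intervalIntegral.integral_const_mul,
          integral_one_sub_mul_rpow_neg_one_sub hb.ne' hσ.ne' (by linarith)]
        ring
    _ ≤ C / (b * σ) * (1 - b * t) ^ (-σ) := by
        gcongr
        linarith

theorem key_integral_estimate_general
    (N : ℕ) (α b K M σ T t' : ℝ)
    (hα0 : 0 < α) (hα : α < 2/(N : ℝ)) (hb : 0 < b) (hM : 0 < M)
    (hσ : 0 < σ) (hT : T < 1/b)
    (ht'1 : t' < 1/b) (ht' : (1 - b*t') ^ ((2-(N : ℝ)*α)/2) = 1/2)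
    (g : ℝ → ℝ) (hg0 : ∀ s, 0 ≤ s → s < T → 0 ≤ g s)
    (hg1 : ∀ s, 0 ≤ s → s < T → g s ≤ (4*K) ^ α)
    (hg2 : ∀ s, t' ≤ s → s < T →
      g s ≤ b*(2-(N : ℝ)*α)/(2*α*M)
              * ((1-b*s) ^ ((2-(N : ℝ)*α)/2) / (1 - (1-b*s) ^ ((2-(N : ℝ)*α)/2)))) :
    ∀ t : ℝ, 0 ≤ t → t < T →
      ∫ s in (0:ℝ)..t, (1-b*s) ^ (-(4-(N : ℝ)*α)/2 - σ) * g s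
        ≤ (2*(4*K) ^ α/(b*σ) + (2-(N : ℝ)*α)/(σ*α*M)) * (1-b*t) ^ (-σ) := by
  intro t ht htT
  have hN : (0 : ℝ) < N := (div_pos_iff_of_pos_left two_pos).mp (hα0.trans hα)
  have hNα : (N : ℝ) * α < 2 := by rwa [lt_div_iff₀ hN, mul_comm] at hα
  set β := (2 - (N : ℝ) * α) / 2
  have hβ : 0 < β := half_pos (by linarith)
  set c := b * (2 - (N : ℝ) * α) / (2 * α * M)
  have hc : 0 ≤ c := by positivity
  have hbT : b * T < 1 := by rwa [lt_div_iff₀ hb, mul_comm] at hT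
  have hbt' : 0 < 1 - b * t' := by rw [lt_div_iff₀ hb] at ht'1; linarith
  have hbound : ∀ s ∈ Icc 0 t, (1 - b * s) ^ (-(4 - (N : ℝ) * α) / 2 - σ) * g s
      ≤ 2 * ((4 * K) ^ α + c) * (1 - b * s) ^ (-1 - σ) := by
    rintro s ⟨hs0, hst⟩
    have hsT : s < T := hst.trans_lt htT
    have hsmall : (1 - b * s) ^ β ≤ 1 / 2 →
        g s ≤ c * ((1 - b * s) ^ β / (1 - (1 - b * s) ^ β)) :=
      fun hle => hg2 s (le_of_not_gt fun hs => hle.not_gt <|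
        ht' ▸ Real.rpow_lt_rpow hbt'.le (by nlinarith) hβ) hsT
    rw [show -(4 - (N : ℝ) * α) / 2 - σ = (-1 - σ) - β by ring]
    exact rpow_sub_mul_le (by nlinarith) (hg0 s hs0 hsT) (hg1 s hs0 hsT) hc hsmall
  calc _ ≤ 2 * ((4 * K) ^ α + c) / (b * σ) * (1 - b * t) ^ (-σ) :=
        intervalIntegral_le_of_le_mul_one_sub_mul_rpow hb hσ ht (by nlinarith)
          (fun s hs => mul_nonneg (Real.rpow_nonneg (by nlinarith [hs.2]) _)
            (hg0 s hs.1 (hs.2.trans_lt htT))) hbound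
    _ = _ := by
        congr 1
        simp only [c]
        field_simp

/-- **Estimate (3.18)**: the key integral estimate
`∫₀ᵗ (1-bs)^{-(4-Nα)/2-σ} g(s) ds ≤ (2(4K)^α/(bσ) + (2-Nα)/(σαM)) (1-bt)^{-σ}` for a
function `g` bounded by `(4K)^α` and decaying like
`(b(2-Nα)/(2αM)) (1-bs)^{(2-Nα)/2}/(1-(1-bs)^{(2-Nα)/2})` past `t'`. -/
theorem key_integral_estimate
    (N : ℕ) (hN : 1 ≤ N) (α b K M σ T t' : ℝ)
    (hα0 : 0 < α) (hα : α < 2/(N : ℝ)) (hb : 0 < b) (hK : 1 ≤ K) (hM : 0 < M)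
    (hσ : 0 < σ) (hT0 : 0 < T) (hT : T < 1/b)
    (ht'0 : 0 < t') (ht'1 : t' < 1/b) (ht' : (1 - b*t') ^ ((2-(N : ℝ)*α)/2) = 1/2)
    (g : ℝ → ℝ) (hgm : Measurable g) (hg0 : ∀ s, 0 ≤ s → s < T → 0 ≤ g s)
    (hg1 : ∀ s, 0 ≤ s → s < T → g s ≤ (4*K) ^ α)
    (hg2 : ∀ s, t' ≤ s → s < T →
      g s ≤ b*(2-(N : ℝ)*α)/(2*α*M)
              * ((1-b*s) ^ ((2-(N : ℝ)*α)/2) / (1 - (1-b*s) ^ ((2-(N : ℝ)*α)/2)))) :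
    ∀ t : ℝ, 0 ≤ t → t < T →
      ∫ s in (0:ℝ)..t, (1-b*s) ^ (-(4-(N : ℝ)*α)/2 - σ) * g s
        ≤ (2*(4*K) ^ α/(b*σ) + (2-(N : ℝ)*α)/(σ*α*M)) * (1-b*t) ^ (-σ) :=
  key_integral_estimate_general N α b K M σ T t' hα0 hα hb hM hσ hT ht'1 ht' g hg0 hg1 hg2
end
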